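/- arXiv:1911.03434 — 2 statements merged into one kernel-verified Lean document; each statement's English description precedes it below -/
import Mathlib

section
/- (Theorem 2.1, (1) ⇔ (2)) Let G be a second countable LCA group, Λ a closed subgroup of Ĝ, and W ⊆ L²(G) a closed subspace. Then W is Λ-modulation invariant if and only if Z̃(W) is a multiplicatively invariant subspace of L²(Π, L²(D)) with respect to the determining set 𝒟 = {X_λ|_Π : λ ∈ Λ}. -/
open MeasureTheory Set Function
open scoped ENNReal

theorem Function.Semiconj.mapsTo_image_self_iff {α β : Type*} {f : α → β} {fa : α → α}
    {fb : β → β} (h : Semiconj f fa fb) (hf : Injective f) {s : Set α} :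
    MapsTo fa s s ↔ MapsTo fb (f '' s) (f '' s) := by
  refine ⟨h.mapsTo_image, fun hb => ?_⟩
  simpa only [preimage_image_eq s hf] using h.mapsTo_preimage hb

theorem MeasureTheory.Lp.forall_ae_eq_imp_mem_iff {α E : Type*} {m : MeasurableSpace α}
    [NormedAddCommGroup E] {p : ℝ≥0∞} {μ : Measure α} {S : Set (Lp E p μ)} {f : α → E}
    {v : Lp E p μ} (hv : v =ᵐ[μ] f) :
    (∀ ψ : Lp E p μ, ψ =ᵐ[μ] f → ψ ∈ S) ↔ v ∈ S :=
  ⟨fun h => h v hv, fun hvS _ hψ => Lp.ext (hψ.trans hv.symm) ▸ hvS⟩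

theorem stmt2_general
    (G : Type) [CommGroup G] [TopologicalSpace G]
    [MeasurableSpace G]
    (μ : MeasureTheory.Measure G)
    [MeasurableSpace (PontryaginDual G)]
    (ν : MeasureTheory.Measure (PontryaginDual G))
    -- Λ a closed subgroup of the dual group Ĝ
    (Λ : Subgroup (PontryaginDual G))
    -- Π, a measurable section for G / Λ* (Λ* = the annihilator of Λ in G)
    (PiS : Set G)
    -- D, a measurable section for Ĝ / Λ
    (DS : Set (PontryaginDual G))
    -- the modulation operators M_χ on L²(G) : (M_χ f)(x) = χ(x) f(x)
    (Mod : PontryaginDual G → (MeasureTheory.Lp ℂ 2 μ →L[ℂ] MeasureTheory.Lp ℂ 2 μ))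
    -- the translation operators T_λ on L²(Ĝ) : (T_λ g)(χ) = g(χ - λ)
    (Trans : PontryaginDual G → (MeasureTheory.Lp ℂ 2 ν →L[ℂ] MeasureTheory.Lp ℂ 2 ν))
    -- the Fourier (Plancherel) transform F : L²(G) → L²(Ĝ), intertwining
    -- modulations with translations
    (F : MeasureTheory.Lp ℂ 2 μ ≃ₗᵢ[ℂ] MeasureTheory.Lp ℂ 2 ν)
    (hF : ∀ χ f, F (Mod χ f) = Trans χ (F f))
    -- the Zak-type isometric isomorphism Z : L²(Ĝ) → L²(Π, L²(D)) of
    -- Bownik–Helson–Petersen, satisfying Z(T_λ φ) = X_λ|_Π · Z(φ) for λ ∈ Λ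
    (Z : MeasureTheory.Lp ℂ 2 ν ≃ₗᵢ[ℂ]
      MeasureTheory.Lp (MeasureTheory.Lp ℂ 2 (ν.restrict DS)) 2 (μ.restrict PiS))
    (hZ : ∀ l ∈ Λ, ∀ g, Z (Trans l g) =ᵐ[μ.restrict PiS]
      fun x => ((l x : ℂ)) • (Z g) x)
    (W : Submodule ℂ (Lp ℂ 2 μ)) :
    (∀ l ∈ Λ, ∀ f ∈ W, Mod l f ∈ W) ↔
      (∀ φ ∈ (fun f : Lp ℂ 2 μ => Z (F f)) '' (W : Set (Lp ℂ 2 μ)), ∀ l ∈ Λ,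
        ∀ ψ : Lp (Lp ℂ 2 (ν.restrict DS)) 2 (μ.restrict PiS),
          (ψ =ᵐ[μ.restrict PiS] fun x => ((l x : ℂ)) • φ x) →
            ψ ∈ (fun f : Lp ℂ 2 μ => Z (F f)) '' (W : Set (Lp ℂ 2 μ))) := by
  set e := fun f : Lp ℂ 2 μ => Z (F f)
  -- multiplication by `X_λ|_Π`, transported from `T_λ` through `Z`
  set mul := fun l φ => Z (Trans l (Z.symm φ))
  have semiconj (l) : Semiconj e (Mod l) (mul l) := fun f => by simp [e, mul, hF]
  have mul_ae_eq (l) (hl : l ∈ Λ) (φ) : mul l φ =ᵐ[μ.restrict PiS] fun x => (l x : ℂ) • φ x := by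
    simpa [mul] using hZ l hl (Z.symm φ)
  calc (∀ l ∈ Λ, ∀ f ∈ W, Mod l f ∈ W)
      ↔ ∀ l ∈ Λ, MapsTo (mul l) (e '' W) (e '' W) :=
        forall₂_congr fun l _ => (semiconj l).mapsTo_image_self_iff (Z.injective.comp F.injective)
    _ ↔ _ := by
      rw [forall₂_comm]
      refine forall₂_congr fun l hl => forall₂_congr fun φ _ => ?_
      exact (Lp.forall_ae_eq_imp_mem_iff (mul_ae_eq l hl φ)).symm

/-- Theorem 2.1, (1) ⇔ (2). A closed subspace W ⊆ L²(G) is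
Λ-modulation invariant iff Z̃(W) is multiplicatively invariant in L²(Π, L²(D))
with respect to the determining set 𝒟 = {X_λ|_Π : λ ∈ Λ}. -/
theorem stmt2
    (G : Type) [CommGroup G] [TopologicalSpace G] [IsTopologicalGroup G]
    [LocallyCompactSpace G] [SecondCountableTopology G]
    [MeasurableSpace G] [BorelSpace G]
    (μ : MeasureTheory.Measure G) [μ.IsHaarMeasure]
    [MeasurableSpace (PontryaginDual G)] [BorelSpace (PontryaginDual G)]
    [LocallyCompactSpace (PontryaginDual G)] [SecondCountableTopology (PontryaginDual G)]
    (ν : MeasureTheory.Measure (PontryaginDual G)) [ν.IsHaarMeasure]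
    -- Λ a closed subgroup of the dual group Ĝ
    (Λ : Subgroup (PontryaginDual G)) (hΛ : IsClosed (Λ : Set (PontryaginDual G)))
    -- Π, a measurable section for G / Λ* (Λ* = the annihilator of Λ in G)
    (PiS : Set G) (hPiSmeas : MeasurableSet PiS)
    (hPiSsec : ∀ x : G, ∃! p, p ∈ PiS ∧ ∀ l ∈ Λ, l (x / p) = 1)
    -- D, a measurable section for Ĝ / Λ
    (DS : Set (PontryaginDual G)) (hDSmeas : MeasurableSet DS)
    (hDSsec : ∀ χ : PontryaginDual G, ∃! d, d ∈ DS ∧ χ / d ∈ Λ)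
    -- the modulation operators M_χ on L²(G) : (M_χ f)(x) = χ(x) f(x)
    (Mod : PontryaginDual G → (MeasureTheory.Lp ℂ 2 μ →L[ℂ] MeasureTheory.Lp ℂ 2 μ))
    (hMod : ∀ χ f, Mod χ f =ᵐ[μ] fun x => (χ x : ℂ) * f x)
    -- the translation operators T_λ on L²(Ĝ) : (T_λ g)(χ) = g(χ - λ)
    (Trans : PontryaginDual G → (MeasureTheory.Lp ℂ 2 ν →L[ℂ] MeasureTheory.Lp ℂ 2 ν))
    (hTrans : ∀ l g, Trans l g =ᵐ[ν] fun χ => g (χ / l))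
    -- the Fourier (Plancherel) transform F : L²(G) → L²(Ĝ), intertwining
    -- modulations with translations
    (F : MeasureTheory.Lp ℂ 2 μ ≃ₗᵢ[ℂ] MeasureTheory.Lp ℂ 2 ν)
    (hF : ∀ χ f, F (Mod χ f) = Trans χ (F f))
    -- the Zak-type isometric isomorphism Z : L²(Ĝ) → L²(Π, L²(D)) of
    -- Bownik–Helson–Petersen, satisfying Z(T_λ φ) = X_λ|_Π · Z(φ) for λ ∈ Λ
    (Z : MeasureTheory.Lp ℂ 2 ν ≃ₗᵢ[ℂ]
      MeasureTheory.Lp (MeasureTheory.Lp ℂ 2 (ν.restrict DS)) 2 (μ.restrict PiS))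
    (hZ : ∀ l ∈ Λ, ∀ g, Z (Trans l g) =ᵐ[μ.restrict PiS]
      fun x => ((l x : ℂ)) • (Z g) x)
    (W : Submodule ℂ (Lp ℂ 2 μ)) (hW : IsClosed (W : Set (Lp ℂ 2 μ))) :
    (∀ l ∈ Λ, ∀ f ∈ W, Mod l f ∈ W) ↔
      (∀ φ ∈ (fun f : Lp ℂ 2 μ => Z (F f)) '' (W : Set (Lp ℂ 2 μ)), ∀ l ∈ Λ,
        ∀ ψ : Lp (Lp ℂ 2 (ν.restrict DS)) 2 (μ.restrict PiS),
          (ψ =ᵐ[μ.restrict PiS] fun x => ((l x : ℂ)) • φ x) →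
            ψ ∈ (fun f : Lp ℂ 2 μ => Z (F f)) '' (W : Set (Lp ℂ 2 μ))) :=
  stmt2_general G μ ν Λ PiS DS Mod Trans F hF Z hZ W
end

section
/- (Theorem 2.1, generator formula) Let G be a second countable LCA group, Λ a closed subgroup of Ĝ, and 𝒜 a countable subset of L²(G). If W = M^Λ(𝒜) is the Λ-modulation invariant space generated by 𝒜, then the measurable range function J associated with W satisfies J(x) = closure of span{Z̃(φ)(x) : φ ∈ 𝒜} for almost every x ∈ Π. -/
/-!
Write `U = Z ∘ F` and `K x` for the closed span of the fibres `U φ x`, `φ ∈ 𝒜`. Since `U` turns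
the modulation `M_λ` into multiplication of the fibres by the scalar `λ x`, the closed subspace
`M_K = {f | U f x ∈ K x a.e.}` contains every `M_λ φ`, hence `W`; transported by `U`, this says
`M_J ≤ M_K`. Testing this inclusion with the bounded measurable fields `x ↦ P x c`, `c` running
through a countable dense set and cut down to sets of finite measure, gives `J x ≤ K x` a.e.
Conversely `𝒜 ⊆ W` and countability of `𝒜` give `K x ≤ J x` a.e.
-/

open MeasureTheory Filter
open scoped ENNReal InnerProductSpace

section Measurability

variable {α E : Type*} [MeasurableSpace α]

theorem measurable_of_forall_measurable_dist [PseudoMetricSpace E] [SecondCountableTopology E]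
    [MeasurableSpace E] [BorelSpace E] {f : α → E}
    (h : ∀ y, Measurable fun x => dist (f x) y) : Measurable f := by
  refine measurable_of_isOpen fun U hU => ?_
  set balls := {B | ∃ y r, B = Metric.ball y r ∧ B ⊆ U}
  obtain ⟨T, hTc, hTballs, hTU⟩ := TopologicalSpace.isOpen_sUnion_countable balls
    (by rintro _ ⟨y, r, rfl, -⟩; exact Metric.isOpen_ball)
  have hballsU : ⋃₀ balls = U := by
    refine (Set.sUnion_subset (by rintro B ⟨-, -, -, hB⟩; exact hB)).antisymm fun x hx => ?_
    obtain ⟨ε, hε, hxU⟩ := Metric.isOpen_iff.1 hU x hx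
    exact ⟨_, ⟨x, ε, rfl, hxU⟩, Metric.mem_ball_self hε⟩
  rw [← hballsU, ← hTU, Set.preimage_sUnion]
  refine .biUnion hTc fun B hB => ?_
  obtain ⟨y, r, rfl, -⟩ := hTballs hB
  exact h y measurableSet_Iio

variable {𝕜 : Type*} [RCLike 𝕜] [NormedAddCommGroup E] [InnerProductSpace 𝕜 E]
  [SecondCountableTopology E] [MeasurableSpace E] [BorelSpace E]

theorem measurable_starProjection_apply {J : α → Submodule 𝕜 E}
    [∀ x, (J x).HasOrthogonalProjection]
    (h : ∀ a b, Measurable fun x => ⟪(J x).starProjection a, b⟫_𝕜) (a : E) :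
    Measurable fun x => (J x).starProjection a := by
  refine measurable_of_forall_measurable_dist fun y => ?_
  -- `‖P a‖² = re ⟪P a, a⟫` makes the distance to `y` a function of inner products only
  have hdist : (fun x => dist ((J x).starProjection a) y) = fun x =>
      √(RCLike.re ⟪(J x).starProjection a, a⟫_𝕜
        - 2 * RCLike.re ⟪(J x).starProjection a, y⟫_𝕜 + ‖y‖ ^ 2) := by
    ext x
    rw [Submodule.re_inner_starProjection_eq_normSq, Submodule.coe_norm,
      ← Submodule.starProjection_apply, ← norm_sub_sq (𝕜 := 𝕜), Real.sqrt_sq (norm_nonneg _),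
      dist_eq_norm]
  rw [hdist]
  exact ((RCLike.measurable_re.comp (h a a)).sub
    ((RCLike.measurable_re.comp (h a y)).const_mul 2) |>.add measurable_const).sqrt

end Measurability

namespace Submodule

variable {𝕜 E : Type*} [RCLike 𝕜] [NormedAddCommGroup E] [InnerProductSpace 𝕜 E]
  {K : Submodule 𝕜 E} {P : E → E}

theorem hasOrthogonalProjection_of_inner_sub_eq_zero
    (hP : ∀ v, P v ∈ K ∧ ∀ w ∈ K, ⟪v - P v, w⟫_𝕜 = 0) : K.HasOrthogonalProjection :=
  ⟨fun v => ⟨P v, (hP v).1, (K.mem_orthogonal' _).2 (hP v).2⟩⟩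

theorem starProjection_eq_of_inner_sub_eq_zero [K.HasOrthogonalProjection]
    (hP : ∀ v, P v ∈ K ∧ ∀ w ∈ K, ⟪v - P v, w⟫_𝕜 = 0) : ⇑K.starProjection = P :=
  funext fun v => K.eq_starProjection_of_mem_of_inner_eq_zero (hP v).1 (hP v).2

theorem isClosed_of_inner_sub_eq_zero (hP : ∀ v, P v ∈ K ∧ ∀ w ∈ K, ⟪v - P v, w⟫_𝕜 = 0) :
    IsClosed (K : Set E) :=
  have := hasOrthogonalProjection_of_inner_sub_eq_zero hP
  K.orthogonal_orthogonal ▸ Kᗮ.isClosed_orthogonal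

end Submodule

namespace MeasureTheory.Lp

variable {α E 𝕜 : Type*} {m : MeasurableSpace α} [NormedField 𝕜] [NormedAddCommGroup E]
  [NormedSpace 𝕜 E] (p : ℝ≥0∞) (μ : Measure α)

/-- The subspace `M_K` of `Lᵖ` fields determined by a range function `K`. -/
def aeMemSubmodule (K : α → Submodule 𝕜 E) : Submodule 𝕜 (Lp E p μ) where
  carrier := {g | ∀ᵐ x ∂μ, g x ∈ K x}
  add_mem' {f g} hf hg := by
    filter_upwards [hf, hg, Lp.coeFn_add f g] with x hfx hgx hx
    rw [hx, Pi.add_apply]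
    exact add_mem hfx hgx
  zero_mem' := by
    filter_upwards [Lp.coeFn_zero E p μ] with x hx
    rw [hx, Pi.zero_apply]
    exact zero_mem _
  smul_mem' c f hf := by
    filter_upwards [hf, Lp.coeFn_smul c f] with x hfx hx
    rw [hx, Pi.smul_apply]
    exact (K x).smul_mem c hfx

variable {p μ}

theorem isClosed_aeMemSubmodule [Fact (1 ≤ p)] {K : α → Submodule 𝕜 E}
    (hK : ∀ x, IsClosed (K x : Set E)) : IsClosed (aeMemSubmodule p μ K : Set (Lp E p μ)) := by
  refine IsSeqClosed.isClosed fun f g hf hfg => ?_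
  -- an `Lᵖ`-convergent sequence has a subsequence converging almost everywhere
  have hmeas : TendstoInMeasure μ (fun n => ⇑(f n)) atTop g :=
    tendstoInMeasure_of_tendsto_eLpNorm (zero_lt_one.trans_le Fact.out).ne'
      (fun n => Lp.aestronglyMeasurable _) (Lp.aestronglyMeasurable _)
      ((Lp.tendsto_Lp_iff_tendsto_eLpNorm' f g).1 hfg)
  obtain ⟨ns, -, hns⟩ := hmeas.exists_seq_tendsto_ae
  filter_upwards [hns, ae_all_iff.2 hf] with x hx hfx
  exact (hK x).mem_of_tendsto hx (.of_forall fun n => hfx (ns n))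

theorem ae_mem_of_aeMemSubmodule_le [SigmaFinite μ] {J K : α → Submodule 𝕜 E}
    (hJK : aeMemSubmodule p μ J ≤ aeMemSubmodule p μ K) {u : α → E} {C : ℝ}
    (hu : AEStronglyMeasurable u μ) (hbdd : ∀ᵐ x ∂μ, ‖u x‖ ≤ C) (huJ : ∀ᵐ x ∂μ, u x ∈ J x) :
    ∀ᵐ x ∂μ, u x ∈ K x := by
  -- cut `u` down to sets of finite measure, so that it becomes an element of `Lᵖ`
  have hmem (n : ℕ) : MemLp ((spanningSets μ n).indicator u) p μ := by
    have := isFiniteMeasure_restrict.2 (measure_spanningSets_lt_top μ n).ne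
    exact (memLp_indicator_iff_restrict (measurableSet_spanningSets μ n)).2 <|
      (memLp_top_of_bound hu.restrict C (ae_restrict_of_ae hbdd)).mono_exponent le_top
  have hK (n : ℕ) : ∀ᵐ x ∂μ, x ∈ spanningSets μ n → u x ∈ K x := by
    have hJ : (hmem n).toLp _ ∈ aeMemSubmodule p μ J := by
      filter_upwards [(hmem n).coeFn_toLp, huJ] with x hx hxJ
      rw [hx]
      by_cases hxn : x ∈ spanningSets μ n
      · rwa [Set.indicator_of_mem hxn]
      · rw [Set.indicator_of_notMem hxn]
        exact zero_mem _
    filter_upwards [hJK hJ, (hmem n).coeFn_toLp] with x hx hxu hxn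
    rwa [hxu, Set.indicator_of_mem hxn] at hx
  filter_upwards [ae_all_iff.2 hK] with x hx
  exact hx _ (mem_spanningSetsIndex μ x)

theorem ae_le_of_aeMemSubmodule_le {𝕜 : Type*} [RCLike 𝕜] [InnerProductSpace 𝕜 E]
    [TopologicalSpace.SeparableSpace E] [SigmaFinite μ] {J K : α → Submodule 𝕜 E}
    (hK : ∀ x, IsClosed (K x : Set E)) {P : α → E → E}
    (hP : ∀ x v, P x v ∈ J x ∧ ∀ w ∈ J x, ⟪v - P x v, w⟫_𝕜 = 0)
    (hPmeas : ∀ a b, Measurable fun x => ⟪P x a, b⟫_𝕜)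
    (hJK : aeMemSubmodule p μ J ≤ aeMemSubmodule p μ K) : ∀ᵐ x ∂μ, J x ≤ K x := by
  have (x : α) := Submodule.hasOrthogonalProjection_of_inner_sub_eq_zero (hP x)
  have hPJ (x : α) := Submodule.starProjection_eq_of_inner_sub_eq_zero (hP x)
  simp only [← hPJ] at hPmeas
  borelize E
  obtain ⟨c, hc⟩ := TopologicalSpace.exists_dense_seq E
  have hproj : ∀ᵐ x ∂μ, ∀ n, (J x).starProjection (c n) ∈ K x :=
    ae_all_iff.2 fun n => ae_mem_of_aeMemSubmodule_le hJK
      (measurable_starProjection_apply hPmeas (c n)).aestronglyMeasurable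
      (.of_forall fun x => (J x).norm_starProjection_apply_le (c n))
      (.of_forall fun x => (J x).starProjection_apply_mem (c n))
  filter_upwards [hproj] with x hx v hv
  rw [← (J x).starProjection_eq_self_iff.2 hv]
  exact hc.induction_on v ((hK x).preimage (J x).starProjection.continuous) hx

end MeasureTheory.Lp

theorem ae_topologicalClosure_span_image_le {α ι E 𝕜 : Type*} {m : MeasurableSpace α}
    {μ : Measure α} [NormedField 𝕜] [NormedAddCommGroup E] [NormedSpace 𝕜 E] {A : Set ι}
    (hA : A.Countable) {g : ι → α → E} {J : α → Submodule 𝕜 E}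
    (hJ : ∀ x, IsClosed (J x : Set E)) (hg : ∀ i ∈ A, ∀ᵐ x ∂μ, g i x ∈ J x) :
    ∀ᵐ x ∂μ, (Submodule.span 𝕜 ((g · x) '' A)).topologicalClosure ≤ J x := by
  filter_upwards [(ae_ball_iff hA).2 hg] with x hx
  refine Submodule.topologicalClosure_minimal _ ?_ (hJ x)
  rw [Submodule.span_le]
  rintro _ ⟨i, hi, rfl⟩
  exact hx i hi

theorem stmt4_general
    (G : Type) [CommGroup G] [TopologicalSpace G] [IsTopologicalGroup G]
    [LocallyCompactSpace G] [SecondCountableTopology G]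
    [MeasurableSpace G]
    (μ : MeasureTheory.Measure G) [μ.IsHaarMeasure]
    [MeasurableSpace (PontryaginDual G)] [BorelSpace (PontryaginDual G)]
    [SecondCountableTopology (PontryaginDual G)]
    (ν : MeasureTheory.Measure (PontryaginDual G)) [ν.IsHaarMeasure]
    -- Λ a closed subgroup of the dual group Ĝ
    (Λ : Subgroup (PontryaginDual G))
    -- Π, a measurable section for G / Λ* (Λ* = the annihilator of Λ in G)
    (PiS : Set G)
    -- D, a measurable section for Ĝ / Λ
    (DS : Set (PontryaginDual G))
    -- the modulation operators M_χ on L²(G) : (M_χ f)(x) = χ(x) f(x)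
    (Mod : PontryaginDual G → (MeasureTheory.Lp ℂ 2 μ →L[ℂ] MeasureTheory.Lp ℂ 2 μ))
    (hMod : ∀ χ f, Mod χ f =ᵐ[μ] fun x => (χ x : ℂ) * f x)
    -- the translation operators T_λ on L²(Ĝ) : (T_λ g)(χ) = g(χ - λ)
    (Trans : PontryaginDual G → (MeasureTheory.Lp ℂ 2 ν →L[ℂ] MeasureTheory.Lp ℂ 2 ν))
    -- the Fourier (Plancherel) transform F : L²(G) → L²(Ĝ), intertwining
    -- modulations with translations
    (F : MeasureTheory.Lp ℂ 2 μ ≃ₗᵢ[ℂ] MeasureTheory.Lp ℂ 2 ν)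
    (hF : ∀ χ f, F (Mod χ f) = Trans χ (F f))
    -- the Zak-type isometric isomorphism Z : L²(Ĝ) → L²(Π, L²(D)) of
    -- Bownik–Helson–Petersen, satisfying Z(T_λ φ) = X_λ|_Π · Z(φ) for λ ∈ Λ
    (Z : MeasureTheory.Lp ℂ 2 ν ≃ₗᵢ[ℂ]
      MeasureTheory.Lp (MeasureTheory.Lp ℂ 2 (ν.restrict DS)) 2 (μ.restrict PiS))
    (hZ : ∀ l ∈ Λ, ∀ g, Z (Trans l g) =ᵐ[μ.restrict PiS]
      fun x => ((l x : ℂ)) • (Z g) x)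
    (A : Set (Lp ℂ 2 μ)) (hA : A.Countable)
    -- W = M^Λ(𝒜), the closed span of {M_λ f : f ∈ 𝒜, λ ∈ Λ}
    (W : Submodule ℂ (Lp ℂ 2 μ))
    (hWdef : W = (Submodule.span ℂ
      {g : Lp ℂ 2 μ | ∃ f ∈ A, ∃ l ∈ Λ, g = Mod l f}).topologicalClosure)
    -- J is the measurable range function associated with W, with orthogonal
    -- projections P
    (J : G → Submodule ℂ (Lp ℂ 2 (ν.restrict DS)))
    (P : G → (Lp ℂ 2 (ν.restrict DS)) →L[ℂ] (Lp ℂ 2 (ν.restrict DS)))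
    (hProj : ∀ x v, P x v ∈ J x ∧ ∀ w ∈ J x, (inner ℂ (v - P x v) w : ℂ) = 0)
    (hJmeas : ∀ a b : Lp ℂ 2 (ν.restrict DS), Measurable fun x => (inner ℂ (P x a) b : ℂ))
    (hJW : ∀ f : Lp ℂ 2 μ, f ∈ W ↔ ∀ᵐ x ∂(μ.restrict PiS), (Z (F f)) x ∈ J x) :
    ∀ᵐ x ∂(μ.restrict PiS),
      J x = (Submodule.span ℂ
        ((fun f : Lp ℂ 2 μ => (Z (F f)) x) '' A)).topologicalClosure := by
  set U := F.trans Z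
  set K := fun x => (Submodule.span ℂ ((fun f : Lp ℂ 2 μ => U f x) '' A)).topologicalClosure
  have hW : W = (Lp.aeMemSubmodule 2 (μ.restrict PiS) J).comap U.toLinearMap := Submodule.ext hJW
  have hAW (f : Lp ℂ 2 μ) (hf : f ∈ A) : f ∈ W := by
    have hMod_one : Mod 1 f = f := Lp.ext <| by
      filter_upwards [hMod 1 f] with x hx
      rw [hx, PontryaginDual.one_apply, Circle.coe_one, one_mul]
    rw [hWdef, ← hMod_one]
    exact Submodule.le_topologicalClosure _ (Submodule.subset_span ⟨f, hf, 1, Λ.one_mem, rfl⟩)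
  have hWK : W ≤ (Lp.aeMemSubmodule 2 (μ.restrict PiS) K).comap U.toLinearMap := by
    rw [hWdef]
    refine Submodule.topologicalClosure_minimal _ ?_
      ((Lp.isClosed_aeMemSubmodule fun x => Submodule.isClosed_topologicalClosure _).preimage
        U.continuous)
    rw [Submodule.span_le]
    rintro _ ⟨f, hf, l, hl, rfl⟩
    filter_upwards [hZ l hl (F f)] with x hx
    change Z (F (Mod l f)) x ∈ K x
    rw [hF, hx]
    exact (K x).smul_mem _ <| Submodule.le_topologicalClosure _ <|
      Submodule.subset_span ⟨f, hf, rfl⟩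
  have hMJK := (Submodule.comap_le_comap_iff_of_surjective U.surjective).1 (hW ▸ hWK)
  -- makes `L²(D)` second countable
  have : Fact ((2 : ℝ≥0∞) ≠ ∞) := ⟨ENNReal.ofNat_ne_top⟩
  filter_upwards [ae_topologicalClosure_span_image_le hA
      (fun x => Submodule.isClosed_of_inner_sub_eq_zero (hProj x))
      (fun f hf => (hJW f).1 (hAW f hf)),
    Lp.ae_le_of_aeMemSubmodule_le (fun x => Submodule.isClosed_topologicalClosure _)
      hProj hJmeas hMJK] with x hKJ hJK
  exact le_antisymm hJK hKJ

/-- Theorem 2.1, generator formula. If W = M^Λ(𝒜) is the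
Λ-modulation invariant space generated by a countable set 𝒜 ⊆ L²(G), then the
measurable range function J associated with W satisfies
J(x) = closure span{Z̃(φ)(x) : φ ∈ 𝒜} for a.e. x ∈ Π. -/
theorem stmt4
    (G : Type) [CommGroup G] [TopologicalSpace G] [IsTopologicalGroup G]
    [LocallyCompactSpace G] [SecondCountableTopology G]
    [MeasurableSpace G] [BorelSpace G]
    (μ : MeasureTheory.Measure G) [μ.IsHaarMeasure]
    [MeasurableSpace (PontryaginDual G)] [BorelSpace (PontryaginDual G)]
    [LocallyCompactSpace (PontryaginDual G)] [SecondCountableTopology (PontryaginDual G)]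
    (ν : MeasureTheory.Measure (PontryaginDual G)) [ν.IsHaarMeasure]
    -- Λ a closed subgroup of the dual group Ĝ
    (Λ : Subgroup (PontryaginDual G)) (hΛ : IsClosed (Λ : Set (PontryaginDual G)))
    -- Π, a measurable section for G / Λ* (Λ* = the annihilator of Λ in G)
    (PiS : Set G) (hPiSmeas : MeasurableSet PiS)
    (hPiSsec : ∀ x : G, ∃! p, p ∈ PiS ∧ ∀ l ∈ Λ, l (x / p) = 1)
    -- D, a measurable section for Ĝ / Λ
    (DS : Set (PontryaginDual G)) (hDSmeas : MeasurableSet DS)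
    (hDSsec : ∀ χ : PontryaginDual G, ∃! d, d ∈ DS ∧ χ / d ∈ Λ)
    -- the modulation operators M_χ on L²(G) : (M_χ f)(x) = χ(x) f(x)
    (Mod : PontryaginDual G → (MeasureTheory.Lp ℂ 2 μ →L[ℂ] MeasureTheory.Lp ℂ 2 μ))
    (hMod : ∀ χ f, Mod χ f =ᵐ[μ] fun x => (χ x : ℂ) * f x)
    -- the translation operators T_λ on L²(Ĝ) : (T_λ g)(χ) = g(χ - λ)
    (Trans : PontryaginDual G → (MeasureTheory.Lp ℂ 2 ν →L[ℂ] MeasureTheory.Lp ℂ 2 ν))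
    (hTrans : ∀ l g, Trans l g =ᵐ[ν] fun χ => g (χ / l))
    -- the Fourier (Plancherel) transform F : L²(G) → L²(Ĝ), intertwining
    -- modulations with translations
    (F : MeasureTheory.Lp ℂ 2 μ ≃ₗᵢ[ℂ] MeasureTheory.Lp ℂ 2 ν)
    (hF : ∀ χ f, F (Mod χ f) = Trans χ (F f))
    -- the Zak-type isometric isomorphism Z : L²(Ĝ) → L²(Π, L²(D)) of
    -- Bownik–Helson–Petersen, satisfying Z(T_λ φ) = X_λ|_Π · Z(φ) for λ ∈ Λ
    (Z : MeasureTheory.Lp ℂ 2 ν ≃ₗᵢ[ℂ]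
      MeasureTheory.Lp (MeasureTheory.Lp ℂ 2 (ν.restrict DS)) 2 (μ.restrict PiS))
    (hZ : ∀ l ∈ Λ, ∀ g, Z (Trans l g) =ᵐ[μ.restrict PiS]
      fun x => ((l x : ℂ)) • (Z g) x)
    (A : Set (Lp ℂ 2 μ)) (hA : A.Countable)
    -- W = M^Λ(𝒜), the closed span of {M_λ f : f ∈ 𝒜, λ ∈ Λ}
    (W : Submodule ℂ (Lp ℂ 2 μ))
    (hWdef : W = (Submodule.span ℂ
      {g : Lp ℂ 2 μ | ∃ f ∈ A, ∃ l ∈ Λ, g = Mod l f}).topologicalClosure)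
    -- J is the measurable range function associated with W, with orthogonal
    -- projections P
    (J : G → Submodule ℂ (Lp ℂ 2 (ν.restrict DS)))
    (P : G → (Lp ℂ 2 (ν.restrict DS)) →L[ℂ] (Lp ℂ 2 (ν.restrict DS)))
    (hJclosed : ∀ x, IsClosed ((J x : Set (Lp ℂ 2 (ν.restrict DS)))))
    (hProj : ∀ x v, P x v ∈ J x ∧ ∀ w ∈ J x, (inner ℂ (v - P x v) w : ℂ) = 0)
    (hJmeas : ∀ a b : Lp ℂ 2 (ν.restrict DS), Measurable fun x => (inner ℂ (P x a) b : ℂ))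
    (hJW : ∀ f : Lp ℂ 2 μ, f ∈ W ↔ ∀ᵐ x ∂(μ.restrict PiS), (Z (F f)) x ∈ J x) :
    ∀ᵐ x ∂(μ.restrict PiS),
      J x = (Submodule.span ℂ
        ((fun f : Lp ℂ 2 μ => (Z (F f)) x) '' A)).topologicalClosure :=
  stmt4_general G μ ν Λ PiS DS Mod hMod Trans F hF Z hZ A hA W hWdef J P hProj hJmeas hJW
end
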